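/- Let (X,w) be a weighted graph and R a nontrivial abelian group. If the 0-dimensional coboundary expansion with coefficients in the constant augmented sheaf R satisfies cb₀(X,w,R) ≥ ε, then the Cheeger constant satisfies h(X,w) ≥ ε. Consequently, for any two nontrivial abelian groups R, S: if cb₀(X,w,R) ≥ ε, then cb₀(X,w,S) ≥ ε/2. -/

import Mathlib

/-!
A two-valued function with level sets `A` and `Aᶜ` has coboundary supported exactly on the cut
of `A`, so the coboundary bound for it is the Cheeger bound for `A`. Conversely, given any `g`,
let `b` be the value with the heaviest level set: every other level set `L` weighs at most as
much as `Lᶜ`, so the Cheeger bound applies to it, and the cuts of these level sets together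
count each edge of the support of `d₀g` at most twice.
-/

open SimpleGraph Finset
open scoped Classical

theorem Finset.sum_filter_ne_eq_sum_erase_fiber {ι κ M : Type*} [Fintype ι] [AddCommMonoid M]
    (g : ι → κ) (b : κ) (f : ι → M) :
    ∑ i ∈ univ.filter (fun i => g i ≠ b), f i =
      ∑ c ∈ (univ.image g).erase b, ∑ i ∈ univ.filter (fun i => g i = c), f i := by
  rw [← sum_fiberwise_of_maps_to (g := g) (t := (univ.image g).erase b)
    (fun i hi => by simpa using hi)]
  refine sum_congr rfl fun c hc => ?_
  rw [filter_filter]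
  congr 1
  ext i
  simp only [mem_filter, mem_univ, true_and, and_iff_right_iff_imp]
  rintro rfl
  exact (mem_erase.1 hc).1

namespace SimpleGraph

variable {V : Type*} [Fintype V] [DecidableEq V] (G : SimpleGraph V) [DecidableRel G.Adj]
  (wE : Sym2 V → ℝ)

noncomputable def cutWeight (A : Finset V) : ℝ :=
  ∑ u ∈ A, ∑ v ∈ G.neighborFinset u \ A, wE s(u, v)

/-- Sums over ordered pairs of neighbours, so this is twice the weight `‖d₀f‖` of the support of
the coboundary of `f`. -/
noncomputable def disagreementWeight {R : Type*} (f : V → R) : ℝ :=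
  ∑ u, ∑ v ∈ G.neighborFinset u, if f u ≠ f v then wE s(u, v) else 0

theorem cutWeight_eq_sum_compl (A : Finset V) :
    G.cutWeight wE A = ∑ u ∈ A, ∑ v ∈ Aᶜ, if G.Adj u v then wE s(u, v) else 0 := by
  refine sum_congr rfl fun u _ => ?_
  rw [← sum_filter]
  congr 1
  ext v
  simp [and_comm]

theorem cutWeight_compl (A : Finset V) : G.cutWeight wE Aᶜ = G.cutWeight wE A := by
  rw [cutWeight_eq_sum_compl, cutWeight_eq_sum_compl, compl_compl, sum_comm]
  refine sum_congr rfl fun u _ => sum_congr rfl fun v _ => ?_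
  rw [Sym2.eq_swap]
  exact if_congr (G.adj_comm v u) rfl rfl

theorem cutWeight_nonneg (hE : ∀ e ∈ G.edgeSet, 0 ≤ wE e) (A : Finset V) :
    0 ≤ G.cutWeight wE A :=
  sum_nonneg fun u _ => sum_nonneg fun v hv =>
    hE _ (G.mem_edgeSet.2 ((G.mem_neighborFinset u v).1 (mem_sdiff.1 hv).1))

theorem disagreementWeight_eq_sum_cutWeight_fiber {R : Type*} (f : V → R) {t : Finset R}
    (ht : ∀ v, f v ∈ t) :
    G.disagreementWeight wE f =
      ∑ c ∈ t, G.cutWeight wE (univ.filter (fun v => f v = c)) := by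
  have fiber : ∀ c, G.cutWeight wE (univ.filter (fun v => f v = c)) =
      ∑ u ∈ univ.filter (fun v => f v = c),
        ∑ v ∈ G.neighborFinset u, if f u ≠ f v then wE s(u, v) else 0 := by
    intro c
    refine sum_congr rfl fun u hu => ?_
    rw [← sum_filter]
    congr 1
    ext v
    simp only [mem_filter, mem_univ, true_and] at hu
    simp [hu, eq_comm]
  simp_rw [fiber]
  exact (sum_fiberwise_of_maps_to (fun v _ => ht v) _).symm

theorem disagreementWeight_ite_mem {R : Type*} {r r' : R} (hr : r ≠ r') (A : Finset V) :
    G.disagreementWeight wE (fun v => if v ∈ A then r else r') = 2 * G.cutWeight wE A := by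
  have fiber_left : univ.filter (fun v => (if v ∈ A then r else r') = r) = A := by
    ext v; by_cases hv : v ∈ A <;> simp [hv, hr.symm]
  have fiber_right : univ.filter (fun v => (if v ∈ A then r else r') = r') = Aᶜ := by
    ext v; by_cases hv : v ∈ A <;> simp [hv, hr]
  rw [G.disagreementWeight_eq_sum_cutWeight_fiber wE _ (t := {r, r'})
      (fun v => by split_ifs <;> simp), sum_pair hr, fiber_left, fiber_right, cutWeight_compl]
  ring

variable {wE} {wV : V → ℝ} {ε : ℝ}

theorem cheeger_bound_of_coboundary_bound {R : Type*} [Nontrivial R] (hV : ∀ v, 0 ≤ wV v)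
    (hε : 0 ≤ ε)
    (hcb : ∀ f : V → R, ∃ a : R,
      ε * (∑ v ∈ univ.filter (fun v => f v ≠ a), wV v) ≤ (1 / 2) * G.disagreementWeight wE f)
    (A : Finset V) :
    ε * min (∑ v ∈ A, wV v) (∑ v ∈ Aᶜ, wV v) ≤ G.cutWeight wE A := by
  obtain ⟨r, r', hr⟩ := exists_pair_ne R
  obtain ⟨a, ha⟩ := hcb fun v => if v ∈ A then r else r'
  have hmin : min (∑ v ∈ A, wV v) (∑ v ∈ Aᶜ, wV v) ≤
      ∑ v ∈ univ.filter (fun v => (if v ∈ A then r else r') ≠ a), wV v := by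
    rcases eq_or_ne a r with rfl | har
    · refine (min_le_right _ _).trans (sum_le_sum_of_subset_of_nonneg ?_ fun v _ _ => hV v)
      intro v hv
      simp_all [hr.symm]
    · refine (min_le_left _ _).trans (sum_le_sum_of_subset_of_nonneg ?_ fun v _ _ => hV v)
      intro v hv
      simp [hv, har.symm]
  calc ε * min (∑ v ∈ A, wV v) (∑ v ∈ Aᶜ, wV v)
      ≤ ε * ∑ v ∈ univ.filter (fun v => (if v ∈ A then r else r') ≠ a), wV v := by gcongr
    _ ≤ (1 / 2) * G.disagreementWeight wE (fun v => if v ∈ A then r else r') := ha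
    _ = G.cutWeight wE A := by rw [G.disagreementWeight_ite_mem wE hr]; ring

theorem mul_weight_fiber_le_cutWeight {S : Type*} (hV : ∀ v, 0 ≤ wV v)
    (hch : ∀ A : Finset V, A.Nonempty → A ≠ univ →
      ε * min (∑ v ∈ A, wV v) (∑ v ∈ Aᶜ, wV v) ≤ G.cutWeight wE A)
    {g : V → S} {b c : S} {vb vc : V} (hvb : g vb = b) (hvc : g vc = c) (hbc : c ≠ b)
    (hmax : ∑ v ∈ univ.filter (fun v => g v = c), wV v ≤
      ∑ v ∈ univ.filter (fun v => g v = b), wV v) :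
    ε * ∑ v ∈ univ.filter (fun v => g v = c), wV v ≤
      G.cutWeight wE (univ.filter (fun v => g v = c)) := by
  have hsub : univ.filter (fun v => g v = b) ⊆ (univ.filter (fun v => g v = c))ᶜ := by
    intro v hv
    simp only [mem_filter, mem_univ, true_and] at hv
    simp [hv, hbc.symm]
  have hne : univ.filter (fun v => g v = c) ≠ univ := fun h =>
    mem_compl.1 (hsub (by simpa using hvb)) (h ▸ mem_univ vb)
  have hmin := min_eq_left (hmax.trans (sum_le_sum_of_subset_of_nonneg hsub fun v _ _ => hV v))
  simpa only [hmin] using hch _ ⟨vc, by simpa using hvc⟩ hne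

theorem exists_coboundary_bound_of_cheeger_bound {S : Type*} [Nonempty S]
    (hE : ∀ e ∈ G.edgeSet, 0 ≤ wE e) (hV : ∀ v, 0 ≤ wV v)
    (hch : ∀ A : Finset V, A.Nonempty → A ≠ univ →
      ε * min (∑ v ∈ A, wV v) (∑ v ∈ Aᶜ, wV v) ≤ G.cutWeight wE A)
    (g : V → S) :
    ∃ b : S, ε * (∑ v ∈ univ.filter (fun v => g v ≠ b), wV v) ≤ G.disagreementWeight wE g := by
  rcases isEmpty_or_nonempty V with _ | _
  · exact ⟨Classical.arbitrary S, by simp [disagreementWeight]⟩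
  obtain ⟨b, hb, hbmax⟩ := exists_max_image (univ.image g)
    (fun c => ∑ v ∈ univ.filter (fun v => g v = c), wV v) (univ_nonempty.image g)
  refine ⟨b, ?_⟩
  have hfiber : ∀ c ∈ (univ.image g).erase b, ε * ∑ v ∈ univ.filter (fun v => g v = c), wV v ≤
      G.cutWeight wE (univ.filter (fun v => g v = c)) := by
    intro c hc
    obtain ⟨hcb, hc⟩ := mem_erase.1 hc
    obtain ⟨vb, -, hvb⟩ := mem_image.1 hb
    obtain ⟨vc, -, hvc⟩ := mem_image.1 hc
    exact G.mul_weight_fiber_le_cutWeight hV hch hvb hvc hcb (hbmax c hc)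
  calc ε * ∑ v ∈ univ.filter (fun v => g v ≠ b), wV v
      = ∑ c ∈ (univ.image g).erase b, ε * ∑ v ∈ univ.filter (fun v => g v = c), wV v := by
        rw [← mul_sum, sum_filter_ne_eq_sum_erase_fiber]
    _ ≤ ∑ c ∈ (univ.image g).erase b, G.cutWeight wE (univ.filter (fun v => g v = c)) :=
        sum_le_sum hfiber
    _ ≤ ∑ c ∈ univ.image g, G.cutWeight wE (univ.filter (fun v => g v = c)) :=
        sum_le_sum_of_subset_of_nonneg (erase_subset _ _) fun c _ _ => G.cutWeight_nonneg wE hE _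
    _ = G.disagreementWeight wE g :=
        (G.disagreementWeight_eq_sum_cutWeight_fiber wE g
          fun v => mem_image_of_mem g (mem_univ v)).symm

end SimpleGraph

theorem stmt15_general {V : Type*} [Fintype V] [DecidableEq V] (G : SimpleGraph V)
    [DecidableRel G.Adj]
    (wE : Sym2 V → ℝ) (wV : V → ℝ)
    (hEpos : ∀ e ∈ G.edgeSet, 0 < wE e) (hVpos : ∀ v : V, 0 < wV v)
    (R S : Type*) [Nontrivial R] [Nontrivial S]
    (ε : ℝ) (hε : 0 ≤ ε)
    (hcb : ∀ f : V → R, ∃ a : R,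
      ε * (∑ v ∈ Finset.univ.filter (fun v => f v ≠ a), wV v)
        ≤ (1 / 2) * ∑ u, ∑ v ∈ G.neighborFinset u,
            (if f u ≠ f v then wE s(u, v) else 0)) :
    (∀ A : Finset V, A.Nonempty → A ≠ Finset.univ →
      ε * min (∑ v ∈ A, wV v) (∑ v ∈ Aᶜ, wV v)
        ≤ ∑ u ∈ A, ∑ v ∈ (G.neighborFinset u) \ A, wE s(u, v)) ∧
    (∀ g : V → S, ∃ b : S,
      (ε / 2) * (∑ v ∈ Finset.univ.filter (fun v => g v ≠ b), wV v)
        ≤ (1 / 2) * ∑ u, ∑ v ∈ G.neighborFinset u,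
            (if g u ≠ g v then wE s(u, v) else 0)) := by
  have hV : ∀ v, 0 ≤ wV v := fun v => (hVpos v).le
  have cheeger : ∀ A : Finset V, A.Nonempty → A ≠ univ →
      ε * min (∑ v ∈ A, wV v) (∑ v ∈ Aᶜ, wV v) ≤ G.cutWeight wE A :=
    fun A _ _ => G.cheeger_bound_of_coboundary_bound hV hε hcb A
  refine ⟨cheeger, fun g => ?_⟩
  obtain ⟨b, hb⟩ := G.exists_coboundary_bound_of_cheeger_bound
    (fun e he => (hEpos e he).le) hV cheeger g
  exact ⟨b, by rw [disagreementWeight] at hb; linarith⟩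

/-- If `cb₀(X,w,R) ≥ ε` for the constant augmented sheaf with coefficients in a
nontrivial abelian group `R` (stated: for every `f : X(0) → R` there is `a` with
`‖d₀f‖_w ≥ ε·w({v : f v ≠ a})`), then the Cheeger constant satisfies
`h(X,w) ≥ ε`, and for any other nontrivial abelian group `S`,
`cb₀(X,w,S) ≥ ε/2`. -/
theorem stmt15 {V : Type*} [Fintype V] [DecidableEq V] (G : SimpleGraph V)
    [DecidableRel G.Adj]
    (wE : Sym2 V → ℝ) (wV : V → ℝ)
    (hEpos : ∀ e ∈ G.edgeSet, 0 < wE e) (hVpos : ∀ v : V, 0 < wV v)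
    (hsum : ∑ e ∈ G.edgeFinset, wE e = 1)
    (hvert : ∀ v : V, 2 * wV v = ∑ u ∈ G.neighborFinset v, wE s(v, u))
    (R S : Type*) [AddCommGroup R] [Nontrivial R] [AddCommGroup S] [Nontrivial S]
    (ε : ℝ) (hε : 0 ≤ ε)
    (hcb : ∀ f : V → R, ∃ a : R,
      ε * (∑ v ∈ Finset.univ.filter (fun v => f v ≠ a), wV v)
        ≤ (1 / 2) * ∑ u, ∑ v ∈ G.neighborFinset u,
            (if f u ≠ f v then wE s(u, v) else 0)) :
    (∀ A : Finset V, A.Nonempty → A ≠ Finset.univ →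
      ε * min (∑ v ∈ A, wV v) (∑ v ∈ Aᶜ, wV v)
        ≤ ∑ u ∈ A, ∑ v ∈ (G.neighborFinset u) \ A, wE s(u, v)) ∧
    (∀ g : V → S, ∃ b : S,
      (ε / 2) * (∑ v ∈ Finset.univ.filter (fun v => g v ≠ b), wV v)
        ≤ (1 / 2) * ∑ u, ∑ v ∈ G.neighborFinset u,
            (if g u ≠ g v then wE s(u, v) else 0)) :=
  stmt15_general G wE wV hEpos hVpos R S ε hε hcb
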